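/- arXiv:1308.3782 — 3 statements merged into one kernel-verified Lean document; each statement's English description precedes it below -/
import Mathlib

section
/- Let s > 0 and M > 0, and let p_ζ(ξ) = |ξ − s e₂|² − s² − 2 i s ξ₁ with characteristic set Σ_ζ = {ξ : ξ₁ = 0, |ξ − s e₂| = s} ⊂ ℝⁿ, n ≥ 3. Then there are constants c_M, C_M > 0 independent of s such that for all ξ with |ξ| ≤ M s, c_M · s · d(ξ, Σ_ζ) ≤ |p_ζ(ξ)| ≤ C_M · s · d(ξ, Σ_ζ). -/
/-!
Both sides are comparable to `s (|‖ξ - a‖ - s| + |ξ₁|)`, where `a = s e₂`. For the symbol,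
its real part factors as `(r - s)(r + s)` with `r = ‖ξ - a‖` and `s ≤ r + s ≤ (M + 2) s`, and
its imaginary part is `-2 s ξ₁`. For the distance, the lower bound is the triangle inequality;
the upper bound comes from projecting `ξ` onto the hyperplane `ξ₁ = 0` and then radially onto
the sphere.
-/

open Metric

open scoped RealInnerProductSpace

section CharSet

variable {E : Type*} [NormedAddCommGroup E] [InnerProductSpace ℝ E]

/-- `Σ_ζ` for `u = e₁`, `a = s e₂`. -/
def charSet (u a : E) (s : ℝ) : Set E := {η | ⟪u, η⟫ = 0 ∧ ‖η - a‖ = s}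

/-- `p_ζ(ξ)` for `u = e₁`, `a = s e₂`, so that `ξ₁ = ⟪u, ξ⟫`. -/
def symbol (u a : E) (s : ℝ) (ξ : E) : ℂ :=
  ((‖ξ - a‖ ^ 2 - s ^ 2 : ℝ) : ℂ) - 2 * Complex.I * ((s * ⟪u, ξ⟫ : ℝ) : ℂ)

variable {u a : E} {s : ℝ}

lemma nonneg_of_charSet_nonempty (hne : (charSet u a s).Nonempty) : 0 ≤ s := by
  obtain ⟨η, -, hη⟩ := hne
  exact hη ▸ norm_nonneg _

lemma abs_sub_add_abs_inner_le_two_mul_infDist_charSet (hu : ‖u‖ = 1)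
    (hne : (charSet u a s).Nonempty) (ξ : E) :
    |‖ξ - a‖ - s| + |⟪u, ξ⟫| ≤ 2 * infDist ξ (charSet u a s) := by
  suffices h : |‖ξ - a‖ - s| ≤ infDist ξ (charSet u a s) ∧
      |⟪u, ξ⟫| ≤ infDist ξ (charSet u a s) by linarith
  simp only [← forall_and, le_infDist hne]
  rintro η ⟨hη₀, hηs⟩
  constructor
  · calc |‖ξ - a‖ - s| = |‖ξ - a‖ - ‖η - a‖| := by rw [hηs]
      _ ≤ ‖(ξ - a) - (η - a)‖ := abs_norm_sub_norm_le _ _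
      _ = dist ξ η := by rw [sub_sub_sub_cancel_right, dist_eq_norm]
  · calc |⟪u, ξ⟫| = |⟪u, ξ - η⟫| := by rw [inner_sub_right, hη₀, sub_zero]
      _ ≤ ‖u‖ * ‖ξ - η‖ := abs_real_inner_le_norm _ _
      _ = dist ξ η := by rw [hu, one_mul, dist_eq_norm]

lemma infDist_charSet_le_of_inner_eq_zero (hua : ⟪u, a⟫ = 0)
    (hne : (charSet u a s).Nonempty) {y : E} (hy : ⟪u, y⟫ = 0) :
    infDist y (charSet u a s) ≤ |‖y - a‖ - s| := by
  have hs := nonneg_of_charSet_nonempty hne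
  rcases eq_or_ne y a with rfl | hya
  · obtain ⟨η, hη⟩ := hne
    calc infDist y (charSet u y s) ≤ dist y η := infDist_le_dist_of_mem hη
      _ = |‖y - y‖ - s| := by
        rw [dist_comm, dist_eq_norm, hη.2, sub_self, norm_zero, zero_sub, abs_neg,
          abs_of_nonneg hs]
  set ρ := ‖y - a‖
  have hρ : 0 < ρ := norm_pos_iff.mpr (sub_ne_zero.mpr hya)
  have hmem : a + (s / ρ) • (y - a) ∈ charSet u a s := by
    refine ⟨?_, ?_⟩
    · simp [inner_add_right, inner_smul_right, inner_sub_right, hua, hy]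
    · rw [add_sub_cancel_left, norm_smul, Real.norm_of_nonneg (by positivity),
        div_mul_cancel₀ _ hρ.ne']
  calc infDist y (charSet u a s) ≤ dist y (a + (s / ρ) • (y - a)) :=
        infDist_le_dist_of_mem hmem
    _ = ‖(1 - s / ρ) • (y - a)‖ := by
      rw [dist_eq_norm, sub_smul, one_smul]; congr 1; abel
    _ = |(1 - s / ρ) * ρ| := by rw [norm_smul, Real.norm_eq_abs, abs_mul, abs_of_pos hρ]
    _ = |ρ - s| := by rw [sub_mul, one_mul, div_mul_cancel₀ _ hρ.ne']

lemma infDist_charSet_le (hu : ‖u‖ = 1) (hua : ⟪u, a⟫ = 0)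
    (hne : (charSet u a s).Nonempty) (ξ : E) :
    infDist ξ (charSet u a s) ≤ |‖ξ - a‖ - s| + 2 * |⟪u, ξ⟫| := by
  set t := ⟪u, ξ⟫
  set y := ξ - t • u
  have hy : ⟪u, y⟫ = 0 := by
    rw [inner_sub_right, real_inner_smul_right, real_inner_self_eq_norm_sq, hu]; ring
  have hξy : dist ξ y = |t| := by
    rw [dist_eq_norm, sub_sub_cancel, norm_smul, hu, mul_one, Real.norm_eq_abs]
  have hnorm : |‖y - a‖ - ‖ξ - a‖| ≤ |t| := by
    calc |‖y - a‖ - ‖ξ - a‖| ≤ ‖(y - a) - (ξ - a)‖ := abs_norm_sub_norm_le _ _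
      _ = |t| := by rw [sub_sub_sub_cancel_right, ← dist_eq_norm, dist_comm, hξy]
  calc infDist ξ (charSet u a s) ≤ infDist y (charSet u a s) + dist ξ y :=
        infDist_le_infDist_add_dist
    _ ≤ |‖y - a‖ - s| + |t| := by
        gcongr
        · exact infDist_charSet_le_of_inner_eq_zero hua hne hy
        · exact hξy.le
    _ ≤ |‖ξ - a‖ - s| + 2 * |t| := by
        have := abs_sub_le (‖y - a‖) (‖ξ - a‖) s
        linarith

lemma symbol_re (ξ : E) : (symbol u a s ξ).re = ‖ξ - a‖ ^ 2 - s ^ 2 := by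
  simp [symbol, pow_two]

lemma symbol_im (ξ : E) : (symbol u a s ξ).im = -(2 * (s * ⟪u, ξ⟫)) := by
  simp [symbol, pow_two]

lemma abs_sq_sub_sq_eq {r s : ℝ} (hr : 0 ≤ r) (hs : 0 ≤ s) :
    |r ^ 2 - s ^ 2| = |r - s| * (r + s) := by
  rw [sq_sub_sq, abs_mul, abs_of_nonneg (add_nonneg hr hs), mul_comm]

lemma mul_abs_sub_add_abs_inner_le_norm_symbol (hs : 0 ≤ s) (ξ : E) :
    s * (|‖ξ - a‖ - s| + |⟪u, ξ⟫|) ≤ 2 * ‖symbol u a s ξ‖ := by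
  have hre := Complex.abs_re_le_norm (symbol u a s ξ)
  have him := Complex.abs_im_le_norm (symbol u a s ξ)
  rw [symbol_re, abs_sq_sub_sq_eq (norm_nonneg _) hs] at hre
  rw [symbol_im, abs_neg, abs_mul, abs_mul, abs_two, abs_of_nonneg hs] at him
  nlinarith [norm_nonneg (ξ - a), abs_nonneg (‖ξ - a‖ - s)]

lemma norm_symbol_le {M : ℝ} (hM : 0 ≤ M) (hs : 0 ≤ s) (ha : ‖a‖ = s) {ξ : E}
    (hξ : ‖ξ‖ ≤ M * s) :
    ‖symbol u a s ξ‖ ≤ (M + 2) * (s * (|‖ξ - a‖ - s| + |⟪u, ξ⟫|)) := by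
  have h := Complex.norm_le_abs_re_add_abs_im (symbol u a s ξ)
  rw [symbol_re, abs_sq_sub_sq_eq (norm_nonneg _) hs, symbol_im, abs_neg, abs_mul, abs_mul,
    abs_two, abs_of_nonneg hs] at h
  have hr : ‖ξ - a‖ + s ≤ (M + 2) * s := by
    linarith [norm_sub_le ξ a]
  nlinarith [mul_le_mul_of_nonneg_left hr (abs_nonneg (‖ξ - a‖ - s)),
    mul_nonneg (mul_nonneg hM hs) (abs_nonneg ⟪u, ξ⟫)]

theorem norm_symbol_comparable_infDist_charSet (hu : ‖u‖ = 1) (hua : ⟪u, a⟫ = 0)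
    (hne : (charSet u a s).Nonempty) (ha : ‖a‖ = s) {M : ℝ} (hM : 0 ≤ M) {ξ : E}
    (hξ : ‖ξ‖ ≤ M * s) :
    1 / 4 * (s * infDist ξ (charSet u a s)) ≤ ‖symbol u a s ξ‖ ∧
      ‖symbol u a s ξ‖ ≤ 2 * (M + 2) * (s * infDist ξ (charSet u a s)) := by
  have hs := nonneg_of_charSet_nonempty hne
  have hlow := abs_sub_add_abs_inner_le_two_mul_infDist_charSet hu hne ξ
  have hup := infDist_charSet_le hu hua hne ξ
  have hsym := mul_abs_sub_add_abs_inner_le_norm_symbol (u := u) (a := a) hs ξ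
  constructor
  · calc 1 / 4 * (s * infDist ξ (charSet u a s))
          ≤ 1 / 4 * (s * (2 * (|‖ξ - a‖ - s| + |⟪u, ξ⟫|))) := by
            gcongr; linarith [abs_nonneg (‖ξ - a‖ - s)]
      _ ≤ ‖symbol u a s ξ‖ := by linarith
  · calc ‖symbol u a s ξ‖ ≤ (M + 2) * (s * (|‖ξ - a‖ - s| + |⟪u, ξ⟫|)) :=
          norm_symbol_le hM hs ha hξ
      _ ≤ (M + 2) * (s * (2 * infDist ξ (charSet u a s))) := by gcongr
      _ = 2 * (M + 2) * (s * infDist ξ (charSet u a s)) := by ring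

end CharSet

section Euclidean

variable {ι : Type*} [Fintype ι] [DecidableEq ι]

lemma charSet_single_nonempty {i j k : ι} (hij : i ≠ j) (hik : i ≠ k) {s : ℝ}
    (hs : 0 ≤ s) :
    (charSet (EuclideanSpace.single i (1 : ℝ)) (EuclideanSpace.single j s) s).Nonempty := by
  refine ⟨EuclideanSpace.single j s + EuclideanSpace.single k s, ?_, ?_⟩
  · simp [EuclideanSpace.inner_single_left, hij, hik]
  · simp [hs]

end Euclidean

/-- Two-sided estimate `|p_ζ(ξ)| ∼_M s · d(ξ, Σ_ζ)` in the region `|ξ| ≤ M s`,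
with constants independent of `s`, where
`p_ζ(ξ) = |ξ − s e₂|² − s² − 2 i s ξ₁` and
`Σ_ζ = {ξ : ξ₁ = 0, |ξ − s e₂| = s}`. -/
theorem stmt4 (n : ℕ) (hn : 3 ≤ n) (M : ℝ) (hM : 0 < M) :
    ∃ c > 0, ∃ C > 0, ∀ s : ℝ, 0 < s → ∀ ξ : EuclideanSpace ℝ (Fin n),
      ‖ξ‖ ≤ M * s →
      c * (s * Metric.infDist ξ
          {η : EuclideanSpace ℝ (Fin n) |
            η ⟨0, by omega⟩ = 0 ∧
            ‖η - EuclideanSpace.single (⟨1, by omega⟩ : Fin n) s‖ = s}) ≤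
        ‖(((‖ξ - EuclideanSpace.single (⟨1, by omega⟩ : Fin n) s‖ ^ 2 - s ^ 2 : ℝ) : ℂ)
            - 2 * Complex.I * (s * ξ ⟨0, by omega⟩ : ℝ))‖ ∧
      ‖(((‖ξ - EuclideanSpace.single (⟨1, by omega⟩ : Fin n) s‖ ^ 2 - s ^ 2 : ℝ) : ℂ)
            - 2 * Complex.I * (s * ξ ⟨0, by omega⟩ : ℝ))‖ ≤
        C * (s * Metric.infDist ξ
          {η : EuclideanSpace ℝ (Fin n) |
            η ⟨0, by omega⟩ = 0 ∧
            ‖η - EuclideanSpace.single (⟨1, by omega⟩ : Fin n) s‖ = s}) := by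
  refine ⟨1 / 4, by norm_num, 2 * (M + 2), by positivity, fun s hs ξ hξ => ?_⟩
  set u := EuclideanSpace.single (⟨0, by omega⟩ : Fin n) (1 : ℝ)
  set a := EuclideanSpace.single (⟨1, by omega⟩ : Fin n) s
  have hu : ‖u‖ = 1 := by simp [u]
  have hua : ⟪u, a⟫ = 0 := by simp [u, a, EuclideanSpace.inner_single_left]
  have ha : ‖a‖ = s := by simp [a, hs.le]
  have hne : (charSet u a s).Nonempty :=
    charSet_single_nonempty (k := ⟨2, by omega⟩) (Fin.ne_of_val_ne (by norm_num))
      (Fin.ne_of_val_ne (by norm_num)) hs.le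
  have hinner (η : EuclideanSpace ℝ (Fin n)) : η ⟨0, by omega⟩ = ⟪u, η⟫ := by
    simp [u, EuclideanSpace.inner_single_left]
  simp only [hinner]
  exact norm_symbol_comparable_infDist_charSet hu hua hne ha hM.le hξ
end

section
/- Let n ≥ 2, m ≥ 2 an integer, s > 0, and fix j ∈ {2,…,n}. Define the tempered distribution E = c ∂_{η_j}^{m−1}(1/(η_j + i η₁)) on ℝⁿ, where c = (−1)^{m−1}/(s^m (m−1)!) and the function 1/(η_j + i η₁) is locally integrable on ℝⁿ (n ≥ 2). Then s^m (η_j + i η₁)^m · E = 1 as tempered distributions, i.e. for every Schwartz function φ, ⟨E, s^m (η_j + i η₁)^m φ⟩ = ∫_{ℝⁿ} φ dη. -/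
open MeasureTheory

/-- Directional derivative along the `j`-th coordinate, as an operator on
complex-valued functions on `ℝⁿ`. -/
noncomputable def coordDeriv (n : ℕ) (j : Fin n) (f : (Fin n → ℝ) → ℂ) :
    (Fin n → ℝ) → ℂ :=
  fun x => fderiv ℝ f x (Pi.single j 1)

/-!
Write `w = η_j + i η₁` and `D = ∂_{η_j}`, so that `D w = 1`. The Leibniz rule gives
`D (w^(k+2) χ) = w^(k+1) ρ` with `ρ = (k+2) χ + w D χ`, and `∫ w D χ = -∫ χ` because
`∫ D (w χ) = 0`; hence `∫ ρ = (k+1) ∫ χ`. Peeling off derivatives in this way gives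
`∫ w⁻¹ D^k (w^(k+1) χ) = k! ∫ χ` by induction on `k`, the base case being `∫ w⁻¹ w χ = ∫ χ`
since `{w = 0}` is a proper subspace. The singular factor `w⁻¹` only ever meets `w` itself,
so its local integrability is never needed.
-/

open SchwartzMap LineDeriv

theorem ContinuousLinearMap.ae_apply_ne_zero {E F : Type*} [NormedAddCommGroup E]
    [NormedSpace ℝ E] [FiniteDimensional ℝ E] [MeasurableSpace E] [BorelSpace E]
    [NormedAddCommGroup F] [NormedSpace ℝ F] {μ : Measure E} [μ.IsAddHaarMeasure]
    {w : E →L[ℝ] F} (hw : w ≠ 0) : ∀ᵐ x ∂μ, w x ≠ 0 := by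
  have h : LinearMap.ker (w : E →ₗ[ℝ] F) ≠ ⊤ := fun h =>
    hw (ContinuousLinearMap.coe_injective (LinearMap.ker_eq_top.mp h))
  exact measure_mono_null (fun x hx => by simpa using hx) (Measure.addHaar_submodule μ _ h)

namespace SchwartzMap

variable {𝕜 E F : Type*} [RCLike 𝕜] [NormedAddCommGroup E] [NormedSpace ℝ E]
  [NormedAddCommGroup F] [NormedSpace ℝ F]

theorem integral_lineDerivOp_eq_zero [FiniteDimensional ℝ E] [MeasurableSpace E] [BorelSpace E]
    {μ : Measure E} [μ.IsAddHaarMeasure] (f : 𝓢(E, F)) (v : E) :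
    ∫ x, ∂_{v} f x ∂μ = 0 := by
  have h := integral_bilinear_hasLineDerivAt_right_eq_neg_left_of_integrable (μ := μ)
    (f := fun _ => (1 : ℝ)) (f' := 0) (g := f) (g' := ⇑(∂_{v} f : 𝓢(E, F))) (v := v)
    (B := ContinuousLinearMap.lsmul ℝ ℝ) (by simp) (by simpa using (∂_{v} f).integrable)
    (by simpa using f.integrable) (fun x _ => (hasFDerivAt_const (1 : ℝ) x).hasLineDerivAt v)
    (fun x _ => (f.hasFDerivAt x).hasLineDerivAt v)
  simpa using h

variable [NormedSpace 𝕜 F]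

theorem iterate_smulLeftCLM_apply {g : E → 𝕜} (hg : g.HasTemperateGrowth) (k : ℕ)
    (χ : 𝓢(E, F)) (x : E) : (smulLeftCLM F g)^[k] χ x = g x ^ k • χ x := by
  induction k generalizing χ with
  | zero => simp
  | succ k ih =>
    rw [Function.iterate_succ_apply, ih, smulLeftCLM_apply_apply hg, smul_smul, pow_succ]

variable [IsScalarTower ℝ 𝕜 F]

theorem lineDerivOp_smulLeftCLM_clm (w : E →L[ℝ] 𝕜) (v : E) (χ : 𝓢(E, F)) :
    ∂_{v} (smulLeftCLM F ⇑w χ) = w v • χ + smulLeftCLM F ⇑w (∂_{v} χ) := by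
  ext x
  have hw := w.hasTemperateGrowth
  rw [lineDerivOp_apply_eq_fderiv, smulLeftCLM_apply hw, fderiv_fun_smul w.differentiableAt
    χ.differentiableAt]
  simp [hw, lineDerivOp_apply_eq_fderiv, add_comm]

variable {w : E →L[ℝ] 𝕜} {v : E}

theorem lineDerivOp_iterate_smulLeftCLM_clm (hwv : w v = 1) (p : ℕ) (χ : 𝓢(E, F)) :
    ∂_{v} ((smulLeftCLM F ⇑w)^[p + 1] χ) =
      (smulLeftCLM F ⇑w)^[p] (((p : 𝕜) + 1) • χ + smulLeftCLM F ⇑w (∂_{v} χ)) := by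
  induction p generalizing χ with
  | zero => simp [lineDerivOp_smulLeftCLM_clm, hwv]
  | succ p ih =>
    rw [Function.iterate_succ_apply, ih, lineDerivOp_smulLeftCLM_clm, hwv,
      Function.iterate_succ_apply]
    ext x
    simp only [iterate_smulLeftCLM_apply w.hasTemperateGrowth, add_apply, smul_apply, map_add,
      map_smul, one_smul]
    push_cast
    module

variable [FiniteDimensional ℝ E] [MeasurableSpace E] [BorelSpace E] {μ : Measure E}
  [μ.IsAddHaarMeasure]

theorem integral_smulLeftCLM_clm_lineDerivOp (hwv : w v = 1) (χ : 𝓢(E, F)) :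
    ∫ x, smulLeftCLM F ⇑w (∂_{v} χ) x ∂μ = -∫ x, χ x ∂μ := by
  have h := integral_lineDerivOp_eq_zero (μ := μ) (smulLeftCLM F ⇑w χ) v
  rw [lineDerivOp_smulLeftCLM_clm, hwv, one_smul, ← integralCLM_apply 𝕜, map_add,
    integralCLM_apply, integralCLM_apply] at h
  exact eq_neg_of_add_eq_zero_right h

theorem integral_inv_smul_iterate_lineDerivOp_iterate_smulLeftCLM_clm (hwv : w v = 1) (k : ℕ)
    (χ : 𝓢(E, F)) :
    ∫ x, (w x)⁻¹ • (lineDerivOp v)^[k] ((smulLeftCLM F ⇑w)^[k + 1] χ) x ∂μ =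
      k.factorial • ∫ x, χ x ∂μ := by
  induction k generalizing χ with
  | zero =>
    have hw : w ≠ 0 := fun h => by simp [h] at hwv
    simp only [Function.iterate_zero, id_eq, Nat.factorial_zero, one_smul]
    refine integral_congr_ae ?_
    filter_upwards [ContinuousLinearMap.ae_apply_ne_zero hw] with x hx
    simp [smulLeftCLM_apply_apply w.hasTemperateGrowth, inv_smul_smul₀ hx]
  | succ k ih =>
    rw [Function.iterate_succ_apply, lineDerivOp_iterate_smulLeftCLM_clm hwv, ih,
      ← integralCLM_apply 𝕜, map_add, map_smul, integralCLM_apply, integralCLM_apply,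
      integral_smulLeftCLM_clm_lineDerivOp hwv, Nat.factorial_succ]
    push_cast
    module

end SchwartzMap

theorem coordDeriv_iterate {n : ℕ} (j : Fin n) (k : ℕ) (χ : 𝓢(Fin n → ℝ, ℂ)) :
    (coordDeriv n j)^[k] ⇑χ = ⇑((lineDerivOp (Pi.single j 1 : Fin n → ℝ))^[k] χ) := by
  induction k generalizing χ with
  | zero => rfl
  | succ k ih => exact ih (∂_{(Pi.single j 1 : Fin n → ℝ)} χ)

noncomputable def coordAddICoord {n : ℕ} (j i : Fin n) : (Fin n → ℝ) →L[ℝ] ℂ :=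
  Complex.ofRealCLM ∘L ContinuousLinearMap.proj j +
    Complex.I • Complex.ofRealCLM ∘L ContinuousLinearMap.proj i

theorem coordAddICoord_apply {n : ℕ} (j i : Fin n) (x : Fin n → ℝ) :
    coordAddICoord j i x = x j + Complex.I * x i := by
  simp [coordAddICoord]

theorem coordAddICoord_single {n : ℕ} {j i : Fin n} (h : j ≠ i) :
    coordAddICoord j i (Pi.single j 1) = 1 := by
  simp [coordAddICoord_apply, Pi.single_eq_of_ne' h]

/-- The tempered distribution `E = c ∂_{η_j}^{m−1}(1/(η_j + i η₁))`,
`c = (−1)^{m−1}/(s^m (m−1)!)`, satisfies `s^m (η_j + i η₁)^m · E = 1`: tested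
against any Schwartz function `φ`, the distributional pairing
`⟨E, s^m (η_j + i η₁)^m φ⟩ = c (−1)^{m−1} ∫ (η_j + i η₁)^{−1} ∂_{η_j}^{m−1}(s^m (η_j+iη₁)^m φ)`
equals `∫ φ`. -/
theorem stmt7 (n m : ℕ) (hn : 2 ≤ n) (hm : 2 ≤ m) (s : ℝ) (hs : 0 < s)
    (j : Fin n) (hj : j ≠ ⟨0, by omega⟩) :
    ∀ φ : SchwartzMap (Fin n → ℝ) ℂ,
      ((-1 : ℂ) ^ (m - 1) / ((s : ℂ) ^ m * ((m - 1).factorial : ℂ))) *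
          (-1 : ℂ) ^ (m - 1) *
          ∫ η : Fin n → ℝ,
            ((η j : ℂ) + Complex.I * (η ⟨0, by omega⟩ : ℝ))⁻¹ *
              ((coordDeriv n j)^[m - 1]
                (fun η : Fin n → ℝ =>
                  (s : ℂ) ^ m *
                    ((η j : ℂ) + Complex.I * (η ⟨0, by omega⟩ : ℝ)) ^ m * φ η)) η =
        ∫ η : Fin n → ℝ, φ η := by
  intro φ
  obtain ⟨k, rfl⟩ : ∃ k, m = k + 1 := ⟨m - 1, by omega⟩
  have hwv := coordAddICoord_single hj
  simp only [← coordAddICoord_apply, Nat.add_sub_cancel]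
  generalize coordAddICoord j ⟨0, _⟩ = w at hwv ⊢
  have hmul : (fun η : Fin n → ℝ => (s : ℂ) ^ (k + 1) * (w η) ^ (k + 1) * φ η) =
      ⇑((smulLeftCLM ℂ ⇑w)^[k + 1] ((s : ℂ) ^ (k + 1) • φ)) := by
    ext η
    simp only [iterate_smulLeftCLM_apply w.hasTemperateGrowth, smul_apply, smul_eq_mul]
    ring
  have key := integral_inv_smul_iterate_lineDerivOp_iterate_smulLeftCLM_clm (μ := volume)
    hwv k ((s : ℂ) ^ (k + 1) • φ)
  simp only [smul_eq_mul] at key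
  rw [hmul, coordDeriv_iterate, key]
  have hs' : (s : ℂ) ≠ 0 := by exact_mod_cast hs.ne'
  have hfact : (k.factorial : ℂ) ≠ 0 := by exact_mod_cast k.factorial_ne_zero
  simp only [smul_apply, smul_eq_mul, nsmul_eq_mul, integral_const_mul]
  field_simp
  rw [← pow_mul, pow_mul', neg_one_sq, one_pow, one_mul]
end

section
/- Let 1 ≤ m < n/2 be an integer, p = 2n/(n+2m), q = 2n/(n−2m). Assume the Jerison–Kenig Carleman estimate: for all t > n/q with dist(t − n/q, ℤ) = δ > 0 and all u ∈ C_0^∞(ℝⁿ \ {0}), ‖|x|^{−t} u‖_{L^q(ℝⁿ)} ≤ C(δ,n) ‖|x|^{−t} (−Δ)^m u‖_{L^p(ℝⁿ)}. Then there is a constant C depending only on n and m such that for all k ∈ ℝⁿ and all u ∈ C_0^∞(ℝⁿ): ‖e^{k·x} u‖_{L^q(ℝⁿ)} ≤ C ‖e^{k·x} (−Δ)^m u‖_{L^p(ℝⁿ)}. -/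
open MeasureTheory RealInnerProductSpace

/-- The negative Laplacian `−Δ` on complex-valued functions on `ℝⁿ`. -/
noncomputable def negLap (n : ℕ) (f : EuclideanSpace ℝ (Fin n) → ℂ) :
    EuclideanSpace ℝ (Fin n) → ℂ :=
  fun x => -∑ j, fderiv ℝ
    (fun y => fderiv ℝ f y (EuclideanSpace.single j 1)) x
    (EuclideanSpace.single j 1)

/-- The polyharmonic operator `(−Δ)^m`. -/
noncomputable def polyLap (n m : ℕ) (f : EuclideanSpace ℝ (Fin n) → ℂ) :
    EuclideanSpace ℝ (Fin n) → ℂ :=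
  (negLap n)^[m] f

open Filter Topology

section auxiliary

variable {E : Type*} [NormedAddCommGroup E] [NormedSpace ℝ E]

theorem fderiv_shift (f : E → ℂ) (a x : E) :
    fderiv ℝ (fun y => f (y + a)) x = fderiv ℝ f (x + a) := by
  by_cases h : DifferentiableAt ℝ f (x + a)
  · have h2 : DifferentiableAt ℝ (fun y : E => y + a) x :=
      (differentiable_id.add_const a) x
    rw [show (fun y => f (y + a)) = f ∘ (fun y : E => y + a) from rfl,
      fderiv_comp x h h2]
    have : fderiv ℝ (fun y : E => y + a) x = ContinuousLinearMap.id ℝ E := by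
      rw [fderiv_add_const]; exact fderiv_id
    rw [this, ContinuousLinearMap.comp_id]
  · have h' : ¬ DifferentiableAt ℝ (fun y => f (y + a)) x := by
      intro hc
      have hc' : DifferentiableAt ℝ (fun y => f (y + a)) (x + a - a) := by
        simpa using hc
      have : DifferentiableAt ℝ ((fun y => f (y + a)) ∘ (fun z : E => z - a)) (x + a) :=
        hc'.comp (x + a) ((differentiable_id.sub_const a) (x + a))
      have heq : ((fun y => f (y + a)) ∘ (fun z : E => z - a)) = f := by
        funext z; simp
      rw [heq] at this
      exact h this
    rw [fderiv_zero_of_not_differentiableAt h, fderiv_zero_of_not_differentiableAt h']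

theorem negLap_shift (n : ℕ) (f : EuclideanSpace ℝ (Fin n) → ℂ) (a : EuclideanSpace ℝ (Fin n)) :
    negLap n (fun y => f (y + a)) = fun x => negLap n f (x + a) := by
  funext x
  unfold negLap
  congr 1
  refine Finset.sum_congr rfl fun j _ => ?_
  have h1 : (fun y => fderiv ℝ (fun z => f (z + a)) y (EuclideanSpace.single j 1))
      = fun y => (fun w => fderiv ℝ f w (EuclideanSpace.single j 1)) (y + a) := by
    funext y; rw [fderiv_shift]
  rw [h1]
  exact congrFun (congrArg _ (fderiv_shift
    (fun w => fderiv ℝ f w (EuclideanSpace.single j 1)) a x)) _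

theorem polyLap_shift (n m : ℕ) (f : EuclideanSpace ℝ (Fin n) → ℂ) (a : EuclideanSpace ℝ (Fin n)) :
    polyLap n m (fun y => f (y + a)) = fun x => polyLap n m f (x + a) := by
  induction m with
  | zero => simp [polyLap]
  | succ m ih =>
    have h1 : polyLap n (m+1) (fun y => f (y + a)) = negLap n (polyLap n m (fun y => f (y + a))) := by
      simp [polyLap, Function.iterate_succ_apply']
    rw [h1, ih, negLap_shift]
    simp [polyLap, Function.iterate_succ_apply']

theorem contDiff_negLap (n : ℕ) {f : EuclideanSpace ℝ (Fin n) → ℂ} (hf : ContDiff ℝ (⊤ : ℕ∞) f) :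
    ContDiff ℝ (⊤ : ℕ∞) (negLap n f) := by
  unfold negLap
  apply ContDiff.neg
  apply ContDiff.sum
  intro j _
  have h1 : ContDiff ℝ (⊤ : ℕ∞) (fun y => fderiv ℝ f y (EuclideanSpace.single j 1)) :=
    (hf.fderiv_right (by simp)).clm_apply contDiff_const
  exact (h1.fderiv_right (by simp)).clm_apply contDiff_const

theorem contDiff_polyLap (n m : ℕ) {f : EuclideanSpace ℝ (Fin n) → ℂ} (hf : ContDiff ℝ (⊤ : ℕ∞) f) :
    ContDiff ℝ (⊤ : ℕ∞) (polyLap n m f) := by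
  induction m with
  | zero => exact hf
  | succ m ih =>
    have : polyLap n (m+1) f = negLap n (polyLap n m f) := by
      simp [polyLap, Function.iterate_succ_apply']
    rw [this]; exact contDiff_negLap n ih

theorem support_negLap (n : ℕ) (f : EuclideanSpace ℝ (Fin n) → ℂ) :
    Function.support (negLap n f) ⊆ tsupport f := by
  intro x hx
  by_contra hxf
  apply hx
  unfold negLap
  have : ∀ j : Fin n, fderiv ℝ
      (fun y => fderiv ℝ f y (EuclideanSpace.single j 1)) x (EuclideanSpace.single j 1) = 0 := by
    intro j
    have hsub : tsupport (fun y => fderiv ℝ f y (EuclideanSpace.single j 1)) ⊆ tsupport f := by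
      apply closure_minimal _ isClosed_closure
      intro y hy
      apply tsupport_fderiv_subset ℝ (f := f)
      apply subset_closure
      intro h0
      simp [Function.mem_support, h0] at hy
    rw [fderiv_of_notMem_tsupport (𝕜 := ℝ) (fun h => hxf (hsub h))]
    rfl
  simp [this]

theorem tsupport_negLap (n : ℕ) (f : EuclideanSpace ℝ (Fin n) → ℂ) :
    tsupport (negLap n f) ⊆ tsupport f :=
  closure_minimal (support_negLap n f) isClosed_closure

theorem tsupport_polyLap (n m : ℕ) (f : EuclideanSpace ℝ (Fin n) → ℂ) :
    tsupport (polyLap n m f) ⊆ tsupport f := by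
  induction m with
  | zero => rw [polyLap]; simp [tsupport]
  | succ m ih =>
    have : polyLap n (m+1) f = negLap n (polyLap n m f) := by
      simp [polyLap, Function.iterate_succ_apply']
    rw [this]
    exact (tsupport_negLap n _).trans ih

theorem hcs_polyLap (n m : ℕ) {f : EuclideanSpace ℝ (Fin n) → ℂ} (hf : HasCompactSupport f) :
    HasCompactSupport (polyLap n m f) :=
  hf.mono' ((subset_closure.trans (tsupport_polyLap n m f)) : _)

theorem lim_weight {n : ℕ} (g : EuclideanSpace ℝ (Fin n) → ℝ) (hg : Continuous g)
    (hgc : HasCompactSupport g) (hg0 : ∀ x, 0 ≤ g x)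
    (W : ℕ → EuclideanSpace ℝ (Fin n) → ℝ) (Wlim : EuclideanSpace ℝ (Fin n) → ℝ)
    (hWm : ∀ j, Measurable (W j)) (hW0 : ∀ j x, 0 ≤ W j x)
    (M S : ℝ) (hM0 : 0 ≤ M) (hS0 : 0 ≤ S)
    (hM : ∀ j, ∀ x ∈ tsupport g, W j x ≤ M) (hS : ∀ x, g x ≤ S)
    (hconv : ∀ x ∈ tsupport g, Tendsto (fun j => W j x) atTop (𝓝 (Wlim x)))
    (r : ℝ) (hr : 0 < r) :
    Tendsto (fun j => ∫ x, (W j x * g x) ^ r) atTop (𝓝 (∫ x, (Wlim x * g x) ^ r)) := by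
  have hKm : MeasurableSet (tsupport g) := (isClosed_tsupport g).measurableSet
  apply tendsto_integral_of_dominated_convergence
      ((tsupport g).indicator (fun _ => (M * S) ^ r))
  · intro j
    exact ((Real.continuous_rpow_const hr.le).measurable.comp ((hWm j).mul hg.measurable)).aestronglyMeasurable
  · rw [integrable_indicator_iff hKm]
    exact integrableOn_const hgc.measure_lt_top.ne
  · intro j
    refine Filter.Eventually.of_forall fun x => ?_
    by_cases hx : x ∈ tsupport g
    · rw [Set.indicator_of_mem hx, Real.norm_eq_abs,
        abs_of_nonneg (Real.rpow_nonneg (mul_nonneg (hW0 j x) (hg0 x)) r)]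
      exact Real.rpow_le_rpow (mul_nonneg (hW0 j x) (hg0 x))
        (mul_le_mul (hM j x hx) (hS x) (hg0 x) hM0) hr.le
    · have : g x = 0 := image_eq_zero_of_notMem_tsupport hx
      rw [Set.indicator_of_notMem hx, this, mul_zero,
        Real.zero_rpow hr.ne', norm_zero]
  · refine Filter.Eventually.of_forall fun x => ?_
    by_cases hx : x ∈ tsupport g
    · have h1 : Tendsto (fun j => W j x * g x) atTop (𝓝 (Wlim x * g x)) :=
        (hconv x hx).mul_const _
      have h2 : ContinuousAt (fun y : ℝ => y ^ r) (Wlim x * g x) :=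
        Real.continuousAt_rpow_const _ _ (Or.inr hr.le)
      exact h2.tendsto.comp h1
    · have : g x = 0 := image_eq_zero_of_notMem_tsupport hx
      simp only [this, mul_zero, Real.zero_rpow hr.ne']
      exact tendsto_const_nhds

variable {n : ℕ}
local notation "E" => EuclideanSpace ℝ (Fin n)

/-- The auxiliary polynomial `g_t(y)`. -/
noncomputable def gw (k y : EuclideanSpace ℝ (Fin n)) (t : ℝ) : ℝ :=
  1 - 2 * ⟪k, y⟫ / t + ‖k‖^2 * ‖y‖^2 / t^2

theorem norm_sub_smul_sq (k y : E) (hk : k ≠ 0) (t : ℝ) (ht : 0 < t) :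
    ‖y - (t / ‖k‖^2) • k‖^2 = (t / ‖k‖)^2 * gw k y t := by
  have hκ : (0:ℝ) < ‖k‖ := norm_pos_iff.2 hk
  have h1 : ‖y - (t / ‖k‖^2) • k‖^2 = ‖y‖^2 - 2 * ((t / ‖k‖^2) * ⟪y, k⟫) + (t / ‖k‖^2)^2 * ‖k‖^2 := by
    rw [@norm_sub_sq_real]
    rw [real_inner_smul_right, norm_smul]
    rw [Real.norm_eq_abs, abs_of_pos (by positivity : (0:ℝ) < t / ‖k‖^2)]
    ring
  rw [h1, gw, real_inner_comm y k]
  field_simp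
  ring

theorem weight_eq (k y : E) (hk : k ≠ 0) (t : ℝ) (ht : 0 < t)
    (hg : 0 < gw k y t) :
    (t / ‖k‖) ^ t * ‖y - (t / ‖k‖^2) • k‖ ^ (-t) = (gw k y t) ^ (-(t/2)) := by
  have hκ : (0:ℝ) < ‖k‖ := norm_pos_iff.2 hk
  have htκ : (0:ℝ) < t / ‖k‖ := by positivity
  have hD : ‖y - (t / ‖k‖^2) • k‖ = (t / ‖k‖) * Real.sqrt (gw k y t) := by
    have := norm_sub_smul_sq k y hk t ht
    have h2 : ‖y - (t / ‖k‖^2) • k‖ = Real.sqrt (‖y - (t / ‖k‖^2) • k‖^2) := by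
      rw [Real.sqrt_sq (norm_nonneg _)]
    rw [h2, this, Real.sqrt_mul (by positivity), Real.sqrt_sq htκ.le]
  rw [hD, Real.mul_rpow htκ.le (Real.sqrt_nonneg _), ← mul_assoc]
  rw [Real.rpow_neg htκ.le, mul_inv_cancel₀ (ne_of_gt (Real.rpow_pos_of_pos htκ t)), one_mul]
  rw [Real.sqrt_eq_rpow, ← Real.rpow_mul hg.le]
  congr 1
  ring


theorem gw_lower (k y : E) (R t : ℝ) (hk : k ≠ 0) (hR : 1 ≤ R)
    (hy : ‖y‖ ≤ R) (ht : 4 * ‖k‖ * R ≤ t) :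
    1 - 2 * ‖k‖ * R / t ≤ gw k y t := by
  have hκ : (0:ℝ) < ‖k‖ := norm_pos_iff.2 hk
  have ht0 : (0:ℝ) < t := lt_of_lt_of_le (by positivity) ht
  have hip : ⟪k, y⟫ ≤ ‖k‖ * R :=
    (real_inner_le_norm k y).trans (by nlinarith)
  have hsq : (0:ℝ) ≤ ‖k‖^2 * ‖y‖^2 / t^2 := by positivity
  unfold gw
  have h2 : 2 * ⟪k, y⟫ / t ≤ 2 * ‖k‖ * R / t := by
    apply div_le_div_of_nonneg_right (by linarith)
    exact ht0.le
  linarith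

theorem gw_pos (k y : E) (R t : ℝ) (hk : k ≠ 0) (hR : 1 ≤ R)
    (hy : ‖y‖ ≤ R) (ht : 4 * ‖k‖ * R ≤ t) : (1:ℝ)/2 ≤ gw k y t := by
  have hκ : (0:ℝ) < ‖k‖ := norm_pos_iff.2 hk
  have ht0 : (0:ℝ) < t := lt_of_lt_of_le (by positivity) ht
  have h1 : 2 * ‖k‖ * R / t ≤ 1/2 := by
    rw [div_le_div_iff₀ ht0 (by norm_num)]
    linarith
  linarith [gw_lower k y R t hk hR hy ht]

theorem exp_neg_le (s : ℝ) (hs0 : 0 ≤ s) (hs : s ≤ 1/2) : Real.exp (-(2*s)) ≤ 1 - s := by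
  have h1 : 1 + 2*s ≤ Real.exp (2*s) := by
    have := Real.add_one_le_exp (2*s); linarith
  have h2 : Real.exp (-(2*s)) = (Real.exp (2*s))⁻¹ := by
    rw [Real.exp_neg]
  have hA : (0:ℝ) ≤ 1 - s := by linarith
  have hB : 1 ≤ (1-s) * (1+2*s) := by nlinarith
  have hC : (1-s) * (1+2*s) ≤ (1-s) * Real.exp (2*s) := by nlinarith
  have hD : 1 ≤ (1-s) * Real.exp (2*s) := hB.trans hC
  calc Real.exp (-(2*s)) = 1 * Real.exp (-(2*s)) := (one_mul _).symm
    _ ≤ ((1-s) * Real.exp (2*s)) * Real.exp (-(2*s)) :=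
        mul_le_mul_of_nonneg_right hD (Real.exp_pos _).le
    _ = (1-s) * (Real.exp (2*s) * Real.exp (-(2*s))) := by ring
    _ = 1-s := by rw [← Real.exp_add]; simp

theorem weight_bound (k y : E) (R t : ℝ) (hk : k ≠ 0) (hR : 1 ≤ R)
    (hy : ‖y‖ ≤ R) (ht : 4 * ‖k‖ * R ≤ t) :
    (gw k y t) ^ (-(t/2)) ≤ Real.exp (2 * ‖k‖ * R) := by
  have hκ : (0:ℝ) < ‖k‖ := norm_pos_iff.2 hk
  have ht0 : (0:ℝ) < t := lt_of_lt_of_le (by positivity) ht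
  set s := 2 * ‖k‖ * R / t with hs_def
  have hs0 : 0 ≤ s := by positivity
  have hs : s ≤ 1/2 := by
    rw [hs_def, div_le_div_iff₀ ht0 (by norm_num)]; linarith
  have hgl : 1 - s ≤ gw k y t := gw_lower k y R t hk hR hy ht
  have hg2 : (1:ℝ)/2 ≤ gw k y t := gw_pos k y R t hk hR hy ht
  have hgpos : 0 < gw k y t := by linarith
  have hlog : -(2*s) ≤ Real.log (gw k y t) := by
    have h1 : Real.exp (-(2*s)) ≤ 1 - s := exp_neg_le s hs0 hs
    have : Real.exp (-(2*s)) ≤ gw k y t := h1.trans hgl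
    rwa [← Real.le_log_iff_exp_le hgpos] at this
  rw [Real.rpow_def_of_pos hgpos]
  apply Real.exp_le_exp.2
  have hts : t * s = 2 * ‖k‖ * R := by
    rw [hs_def]; field_simp
  nlinarith [hlog, ht0]

theorem weight_tendsto (k y : E) (t : ℕ → ℝ) (h1 : ∀ j, 1 ≤ t j)
    (htop : Tendsto t atTop atTop) (hgpos : ∀ j, 0 < gw k y (t j)) :
    Tendsto (fun j => (gw k y (t j)) ^ (-(t j / 2))) atTop (𝓝 (Real.exp ⟪k, y⟫)) := by
  set A := ⟪k, y⟫ with hA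
  set B := ‖k‖^2 * ‖y‖^2 with hB
  set φ : ℝ → ℝ := fun s => Real.log (1 - 2*A*s + B*s^2) with hφdef
  -- derivative of φ at 0
  have hp : HasDerivAt (fun s : ℝ => 1 - 2*A*s + B*s^2) (-(2*A)) 0 := by
    have h1' : HasDerivAt (fun s : ℝ => 2*A*s) (2*A) 0 := by
      simpa using (hasDerivAt_id (0:ℝ)).const_mul (2*A)
    have h2' : HasDerivAt (fun s : ℝ => B*s^2) (B*(2*0^1)) 0 :=
      (hasDerivAt_pow 2 (0:ℝ)).const_mul B
    have := ((hasDerivAt_const (0:ℝ) (1:ℝ)).sub h1').add h2'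
    simp at this; exact this
  have hφ : HasDerivAt φ (-(2*A)) 0 := by
    have hlog : HasDerivAt Real.log (1:ℝ)⁻¹ ((fun s : ℝ => 1 - 2*A*s + B*s^2) 0) := by
      simpa using Real.hasDerivAt_log (by norm_num : (1:ℝ) ≠ 0)
    have := hlog.comp 0 hp
    simp at this; exact this
  rw [hasDerivAt_iff_tendsto_slope] at hφ
  -- 1/t j tends to 0 within ≠ 0
  have htpos : ∀ j, (0:ℝ) < t j := fun j => lt_of_lt_of_le one_pos (h1 j)
  have hinv : Tendsto (fun j => (t j)⁻¹) atTop (𝓝[≠] (0:ℝ)) := by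
    rw [tendsto_nhdsWithin_iff]
    constructor
    · exact htop.inv_tendsto_atTop
    · exact Eventually.of_forall fun j => by
        simp [Set.mem_compl_iff, inv_ne_zero (htpos j).ne']
  have hslope : Tendsto (fun j => slope φ 0 ((t j)⁻¹)) atTop (𝓝 (-(2*A))) :=
    hφ.comp hinv
  -- rewrite slope
  have hslope' : Tendsto (fun j => φ ((t j)⁻¹) * t j) atTop (𝓝 (-(2*A))) := by
    apply hslope.congr
    intro j
    rw [slope_def_field]
    have : φ 0 = 0 := by simp [hφdef]
    rw [this]
    field_simp
    simp only [sub_zero, one_div, div_inv_eq_mul]; ring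
  have hexp : Tendsto (fun j => Real.log (gw k y (t j)) * (-(t j / 2))) atTop (𝓝 A) := by
    have := hslope'.const_mul (-(1/2 : ℝ))
    have h2 : -(1/2 : ℝ) * (-(2*A)) = A := by ring
    rw [h2] at this
    apply this.congr
    intro j
    have hgw : gw k y (t j) = 1 - 2*A*(t j)⁻¹ + B*((t j)⁻¹)^2 := by
      rw [gw, hA, hB]
      field_simp
    rw [hgw]
    have : φ ((t j)⁻¹) = Real.log (1 - 2*A*(t j)⁻¹ + B*((t j)⁻¹)^2) := rfl
    rw [← this]
    ring
  have := (Real.continuous_exp.continuousAt (x := A)).tendsto.comp hexp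
  apply this.congr
  intro j
  simp only [Function.comp_apply]
  rw [Real.rpow_def_of_pos (hgpos j)]
open MeasureTheory Filter Topology RealInnerProductSpace

theorem half_int_dist (c : ℕ) (z : ℤ) : (1/2 : ℝ) ≤ |1/2 + (c : ℝ) - (z : ℝ)| := by
  rcases le_or_gt (z : ℤ) c with h | h
  · have : (z : ℝ) ≤ (c : ℝ) := by exact_mod_cast h
    rw [abs_of_nonneg (by linarith)]
    linarith
  · have h2 : (c : ℤ) + 1 ≤ z := h
    have : (c : ℝ) + 1 ≤ (z : ℝ) := by exact_mod_cast h2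
    rw [abs_of_nonpos (by linarith)]
    linarith

theorem measurable_rpow_const (c : ℝ) : Measurable (fun y : ℝ => y ^ c) := by
  apply measurable_of_continuousOn_compl_singleton (0 : ℝ)
  intro y hy
  exact (Real.continuousAt_rpow_const y c (Or.inl hy)).continuousWithinAt

theorem scale_rpow {n : ℕ} (c r e : ℝ) (hc : 0 ≤ c) (hre : r * e = 1)
    (f : EuclideanSpace ℝ (Fin n) → ℝ) (hf : ∀ x, 0 ≤ f x) :
    c * (∫ x, (f x) ^ r) ^ e = (∫ x, (c * f x) ^ r) ^ e := by
  have h1 : ∀ x, (c * f x) ^ r = c ^ r * (f x) ^ r := fun x => Real.mul_rpow hc (hf x)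
  simp only [h1]
  rw [integral_const_mul]
  rw [Real.mul_rpow (Real.rpow_nonneg hc r)
    (integral_nonneg fun x => Real.rpow_nonneg (hf x) r)]
  rw [← Real.rpow_mul hc, hre, Real.rpow_one]

theorem tsupport_norm_eq {n : ℕ} (f : EuclideanSpace ℝ (Fin n) → ℂ) :
    tsupport (fun x => ‖f x‖) = tsupport f := by
  unfold tsupport
  have : (Function.support fun x => ‖f x‖) = Function.support f := by
    ext x; simp [Function.mem_support]
  rw [this]

end auxiliary

set_option maxHeartbeats 2000000 in
theorem key (n m : ℕ) (hm : 1 ≤ m) (hmn : 2 * m < n) (C₀ : ℝ)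
    (hC : ∀ t : ℝ,
      (n : ℝ) / ((2 * n) / ((n : ℝ) - 2 * m)) < t →
      (∀ z : ℤ, 1/2 ≤ |t - (n : ℝ) / ((2 * n) / ((n : ℝ) - 2 * m)) - z|) →
      ∀ u : EuclideanSpace ℝ (Fin n) → ℂ, ContDiff ℝ (⊤ : ℕ∞) u →
        HasCompactSupport u → (0 : EuclideanSpace ℝ (Fin n)) ∉ tsupport u →
        (∫ x, (‖x‖ ^ (-t) * ‖u x‖) ^ ((2 * n) / ((n : ℝ) - 2 * m))) ^
            (((n : ℝ) - 2 * m) / (2 * n)) ≤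
          C₀ * (∫ x, (‖x‖ ^ (-t) * ‖polyLap n m u x‖) ^
              ((2 * n) / ((n : ℝ) + 2 * m))) ^ (((n : ℝ) + 2 * m) / (2 * n)))
    (k : EuclideanSpace ℝ (Fin n)) (hk : k ≠ 0)
    (u : EuclideanSpace ℝ (Fin n) → ℂ) (hu : ContDiff ℝ (⊤ : ℕ∞) u) (hcs : HasCompactSupport u) :
    (∫ x, (Real.exp ⟪k, x⟫ * ‖u x‖) ^ ((2 * n) / ((n : ℝ) - 2 * m))) ^
        (((n : ℝ) - 2 * m) / (2 * n)) ≤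
      C₀ * (∫ x, (Real.exp ⟪k, x⟫ * ‖polyLap n m u x‖) ^
          ((2 * n) / ((n : ℝ) + 2 * m))) ^ (((n : ℝ) + 2 * m) / (2 * n)) := by
  -- numeric setup
  have hm2n : 2 * (m:ℝ) + 1 ≤ (n:ℝ) := by exact_mod_cast hmn
  have hnpos : (0:ℝ) < n := by
    have : 0 < n := lt_of_le_of_lt (Nat.zero_le _) hmn
    exact_mod_cast this
  have hmpos : (1:ℝ) ≤ (m:ℝ) := by exact_mod_cast hm
  set q : ℝ := (2 * n) / ((n : ℝ) - 2 * m) with hqdef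
  set p : ℝ := (2 * n) / ((n : ℝ) + 2 * m) with hpdef
  set iq : ℝ := ((n : ℝ) - 2 * m) / (2 * n) with hiqdef
  set ip : ℝ := ((n : ℝ) + 2 * m) / (2 * n) with hipdef
  have hnm1 : (1:ℝ) ≤ (n:ℝ) - 2 * m := by linarith
  have hq : 0 < q := div_pos (by linarith) (by linarith)
  have hp : 0 < p := div_pos (by linarith) (by linarith)
  have hiq : 0 < iq := div_pos (by linarith) (by linarith)
  have hip : 0 < ip := div_pos (by linarith) (by linarith)
  have hqiq : q * iq = 1 := by
    rw [hqdef, hiqdef, div_mul_div_comm,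
      div_eq_one_iff_eq (mul_ne_zero (by linarith) (by linarith))]
    ring
  have hpip : p * ip = 1 := by
    rw [hpdef, hipdef, div_mul_div_comm,
      div_eq_one_iff_eq (mul_ne_zero (by linarith) (by linarith))]
    ring
  set nq : ℝ := (n:ℝ) / q with hnqdef
  have hnqval : nq = ((n:ℝ) - 2*m)/2 := by
    rw [hnqdef, hqdef, div_div_eq_mul_div, div_eq_div_iff (by linarith) (by norm_num)]
    ring
  have hnqpos : 0 < nq := by rw [hnqval]; linarith
  have hκ : (0:ℝ) < ‖k‖ := norm_pos_iff.2 hk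
  -- support radius
  obtain ⟨R₀, hR₀⟩ := hcs.isBounded.subset_closedBall 0
  set R : ℝ := max R₀ 1 with hRdef
  have hR1 : (1:ℝ) ≤ R := le_max_right _ _
  have hRsub : tsupport u ⊆ Metric.closedBall 0 R :=
    hR₀.trans (Metric.closedBall_subset_closedBall (le_max_left _ _))
  -- sequence of Carleman exponents
  set N : ℕ := ⌈4 * ‖k‖ * R⌉₊ with hNdef
  set tseq : ℕ → ℝ := fun j => nq + 1/2 + ((N + j : ℕ) : ℝ) with htdef
  have h4 : ∀ j, 4 * ‖k‖ * R ≤ tseq j := by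
    intro j
    have h1 : (4 * ‖k‖ * R) ≤ (N:ℝ) := Nat.le_ceil _
    have h2 : (N:ℝ) ≤ ((N + j:ℕ):ℝ) := by exact_mod_cast Nat.le_add_right N j
    simp only [htdef]
    linarith
  have h1t : ∀ j, 1 ≤ tseq j := by
    intro j
    have h0 : (0:ℝ) ≤ ((N + j:ℕ):ℝ) := Nat.cast_nonneg _
    have h05 : (1:ℝ)/2 ≤ nq := by rw [hnqval]; linarith
    simp only [htdef]; linarith
  have htpos : ∀ j, 0 < tseq j := fun j => lt_of_lt_of_le one_pos (h1t j)
  have htop : Tendsto tseq atTop atTop := by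
    have h1 : Tendsto (fun j : ℕ => ((N + j:ℕ):ℝ)) atTop atTop := by
      have h2 : Tendsto (fun j : ℕ => (N:ℝ) + (j:ℝ)) atTop atTop :=
        tendsto_atTop_add_const_left _ _ tendsto_natCast_atTop_atTop
      apply h2.congr
      intro j; push_cast; ring
    have := tendsto_atTop_add_const_left _ (nq + 1/2) h1
    apply this.congr
    intro j; simp only [htdef]
  have hadm : ∀ j, ∀ z : ℤ, 1/2 ≤ |tseq j - nq - z| := by
    intro j z
    have h1 := half_int_dist (N + j) z
    have heq : tseq j - nq - z = 1/2 + ((N + j:ℕ):ℝ) - z := by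
      simp only [htdef]; ring
    rw [heq]; exact h1
  have htgt : ∀ j, nq < tseq j := by
    intro j
    have h0 : (0:ℝ) ≤ ((N + j:ℕ):ℝ) := Nat.cast_nonneg _
    simp only [htdef]; linarith
  -- the translated weights
  set W : ℕ → EuclideanSpace ℝ (Fin n) → ℝ :=
    fun j x => (tseq j / ‖k‖) ^ (tseq j) * ‖x - (tseq j / ‖k‖^2) • k‖ ^ (-(tseq j)) with hWdef
  -- per-j inequality
  have step : ∀ j,
      (∫ x, (W j x * ‖u x‖) ^ q) ^ iq ≤
        C₀ * (∫ x, (W j x * ‖polyLap n m u x‖) ^ p) ^ ip := by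
    intro j
    set t : ℝ := tseq j with htj
    set a : EuclideanSpace ℝ (Fin n) := (t / ‖k‖^2) • k with hadef
    have ht0 : 0 < t := htpos j
    have hna : ‖a‖ = t / ‖k‖ := by
      rw [hadef, norm_smul, Real.norm_eq_abs, abs_of_pos (by positivity)]
      field_simp
    have hv : ContDiff ℝ (⊤ : ℕ∞) (fun x => u (x + a)) := hu.comp (contDiff_id.add contDiff_const)
    have hcsv : HasCompactSupport (fun x => u (x + a)) :=
      hcs.comp_homeomorph (Homeomorph.addRight a)
    have h0v : (0 : EuclideanSpace ℝ (Fin n)) ∉ tsupport (fun x => u (x + a)) := by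
      have hts : tsupport (fun x => u (x + a)) = (fun x => x + a) ⁻¹' tsupport u := by
        unfold tsupport
        rw [show (fun x => u (x + a)) = u ∘ (Homeomorph.addRight a) from rfl,
          Function.support_comp_eq_preimage]
        exact ((Homeomorph.addRight a).preimage_closure _).symm
      rw [hts]
      intro hmem
      have hmem' : a ∈ tsupport u := by simpa using hmem
      have hle : ‖a‖ ≤ R := mem_closedBall_zero_iff.1 (hRsub hmem')
      have h4R : 4 * ‖k‖ * R ≤ t := h4 j
      rw [hna] at hle
      have : t ≤ ‖k‖ * R := by
        rw [div_le_iff₀ hκ] at hle; linarith [mul_comm R ‖k‖]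
      nlinarith [hκ, hR1]
    have hJ := hC t (htgt j) (hadm j) (fun x => u (x + a)) hv hcsv h0v
    rw [polyLap_shift n m u a] at hJ
    have cov : ∀ (w : EuclideanSpace ℝ (Fin n) → ℂ) (r : ℝ),
        (∫ x, (‖x‖ ^ (-t) * ‖w (x + a)‖) ^ r) = ∫ x, (‖x - a‖ ^ (-t) * ‖w x‖) ^ r := by
      intro w r
      have h1 := integral_add_right_eq_self (μ := volume)
        (fun x => (‖x - a‖ ^ (-t) * ‖w x‖) ^ r) a
      rw [← h1]
      congr 1
      funext x
      simp
    rw [cov u q, cov (polyLap n m u) p] at hJ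
    have hcj : (0:ℝ) ≤ (t / ‖k‖) ^ t := Real.rpow_nonneg (by positivity) _
    have hW1 : (fun x => ((t / ‖k‖) ^ t * (‖x - a‖ ^ (-t) * ‖u x‖)) ^ q)
        = fun x => (W j x * ‖u x‖) ^ q := by
      funext x
      simp only [hWdef, ← htj, ← hadef]
      ring_nf
    have hW2 : (fun x => ((t / ‖k‖) ^ t * (‖x - a‖ ^ (-t) * ‖polyLap n m u x‖)) ^ p)
        = fun x => (W j x * ‖polyLap n m u x‖) ^ p := by
      funext x
      simp only [hWdef, ← htj, ← hadef]
      ring_nf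
    have hsc1 : (t / ‖k‖) ^ t * (∫ x, (‖x - a‖ ^ (-t) * ‖u x‖) ^ q) ^ iq
        = (∫ x, (W j x * ‖u x‖) ^ q) ^ iq := by
      rw [scale_rpow _ q iq hcj hqiq _
        (fun x => mul_nonneg (Real.rpow_nonneg (norm_nonneg _) _) (norm_nonneg _))]
      rw [show (fun x => ((t / ‖k‖) ^ t * (‖x - a‖ ^ (-t) * ‖u x‖)) ^ q)
          = fun x => (W j x * ‖u x‖) ^ q from hW1]
    have hsc2 : (t / ‖k‖) ^ t * (∫ x, (‖x - a‖ ^ (-t) * ‖polyLap n m u x‖) ^ p) ^ ip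
        = (∫ x, (W j x * ‖polyLap n m u x‖) ^ p) ^ ip := by
      rw [scale_rpow _ p ip hcj hpip _
        (fun x => mul_nonneg (Real.rpow_nonneg (norm_nonneg _) _) (norm_nonneg _))]
      rw [show (fun x => ((t / ‖k‖) ^ t * (‖x - a‖ ^ (-t) * ‖polyLap n m u x‖)) ^ p)
          = fun x => (W j x * ‖polyLap n m u x‖) ^ p from hW2]
    calc (∫ x, (W j x * ‖u x‖) ^ q) ^ iq
        = (t / ‖k‖) ^ t * (∫ x, (‖x - a‖ ^ (-t) * ‖u x‖) ^ q) ^ iq := hsc1.symm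
      _ ≤ (t / ‖k‖) ^ t *
          (C₀ * (∫ x, (‖x - a‖ ^ (-t) * ‖polyLap n m u x‖) ^ p) ^ ip) :=
          mul_le_mul_of_nonneg_left hJ hcj
      _ = C₀ * ((t / ‖k‖) ^ t *
          (∫ x, (‖x - a‖ ^ (-t) * ‖polyLap n m u x‖) ^ p) ^ ip) := by ring
      _ = C₀ * (∫ x, (W j x * ‖polyLap n m u x‖) ^ p) ^ ip := by rw [hsc2]
  -- bounds and limits
  obtain ⟨S₁, hS₁⟩ := hcs.exists_bound_of_continuous hu.continuous
  obtain ⟨S₂, hS₂⟩ := (hcs_polyLap n m hcs).exists_bound_of_continuous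
    (contDiff_polyLap n m hu).continuous
  have hS₁0 : 0 ≤ S₁ := le_trans (norm_nonneg _) (hS₁ 0)
  have hS₂0 : 0 ≤ S₂ := le_trans (norm_nonneg _) (hS₂ 0)
  have hWm : ∀ j, Measurable (W j) := fun j =>
    measurable_const.mul ((measurable_rpow_const _).comp
      ((continuous_id.sub continuous_const).norm.measurable))
  have hW0 : ∀ j x, 0 ≤ W j x := fun j x =>
    mul_nonneg (Real.rpow_nonneg (by positivity) _) (Real.rpow_nonneg (norm_nonneg _) _)
  have hMb : ∀ j, ∀ x : EuclideanSpace ℝ (Fin n), ‖x‖ ≤ R →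
      W j x ≤ Real.exp (2 * ‖k‖ * R) := by
    intro j x hx
    have hgw : 1/2 ≤ gw k x (tseq j) := gw_pos k x R (tseq j) hk hR1 hx (h4 j)
    have hgpos : 0 < gw k x (tseq j) := by linarith
    show (tseq j / ‖k‖) ^ (tseq j) * ‖x - (tseq j / ‖k‖^2) • k‖ ^ (-(tseq j))
      ≤ Real.exp (2 * ‖k‖ * R)
    rw [weight_eq k x hk (tseq j) (htpos j) hgpos]
    exact weight_bound k x R (tseq j) hk hR1 hx (h4 j)
  have hconvx : ∀ x : EuclideanSpace ℝ (Fin n), ‖x‖ ≤ R →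
      Tendsto (fun j => W j x) atTop (𝓝 (Real.exp ⟪k, x⟫)) := by
    intro x hx
    have hgpos : ∀ j, 0 < gw k x (tseq j) := fun j =>
      lt_of_lt_of_le (by norm_num) (gw_pos k x R (tseq j) hk hR1 hx (h4 j))
    have h1 := weight_tendsto k x tseq h1t htop hgpos
    apply h1.congr
    intro j
    exact (weight_eq k x hk (tseq j) (htpos j) (hgpos j)).symm
  have hxR1 : ∀ x ∈ tsupport (fun x => ‖u x‖), ‖x‖ ≤ R := by
    intro x hx
    rw [tsupport_norm_eq] at hx
    exact mem_closedBall_zero_iff.1 (hRsub hx)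
  have hxR2 : ∀ x ∈ tsupport (fun x => ‖polyLap n m u x‖), ‖x‖ ≤ R := by
    intro x hx
    rw [tsupport_norm_eq] at hx
    exact mem_closedBall_zero_iff.1 (hRsub (tsupport_polyLap n m u hx))
  have hlim1 : Tendsto (fun j => ∫ x, (W j x * ‖u x‖) ^ q) atTop
      (𝓝 (∫ x, (Real.exp ⟪k, x⟫ * ‖u x‖) ^ q)) :=
    lim_weight (fun x => ‖u x‖) hu.continuous.norm hcs.norm (fun x => norm_nonneg _)
      W (fun x => Real.exp ⟪k, x⟫) hWm hW0 (Real.exp (2 * ‖k‖ * R)) S₁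
      (Real.exp_nonneg _) hS₁0 (fun j x hx => hMb j x (hxR1 x hx)) hS₁
      (fun x hx => hconvx x (hxR1 x hx)) q hq
  have hlim2 : Tendsto (fun j => ∫ x, (W j x * ‖polyLap n m u x‖) ^ p) atTop
      (𝓝 (∫ x, (Real.exp ⟪k, x⟫ * ‖polyLap n m u x‖) ^ p)) :=
    lim_weight (fun x => ‖polyLap n m u x‖) (contDiff_polyLap n m hu).continuous.norm
      (hcs_polyLap n m hcs).norm (fun x => norm_nonneg _)
      W (fun x => Real.exp ⟪k, x⟫) hWm hW0 (Real.exp (2 * ‖k‖ * R)) S₂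
      (Real.exp_nonneg _) hS₂0 (fun j x hx => hMb j x (hxR2 x hx)) hS₂
      (fun x hx => hconvx x (hxR2 x hx)) p hp
  have hA : Tendsto (fun j => (∫ x, (W j x * ‖u x‖) ^ q) ^ iq) atTop
      (𝓝 ((∫ x, (Real.exp ⟪k, x⟫ * ‖u x‖) ^ q) ^ iq)) :=
    ((Real.continuousAt_rpow_const _ iq (Or.inr hiq.le)).tendsto.comp hlim1)
  have hB : Tendsto (fun j => C₀ * (∫ x, (W j x * ‖polyLap n m u x‖) ^ p) ^ ip) atTop
      (𝓝 (C₀ * (∫ x, (Real.exp ⟪k, x⟫ * ‖polyLap n m u x‖) ^ p) ^ ip)) :=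
    ((Real.continuousAt_rpow_const _ ip (Or.inr hip.le)).tendsto.comp hlim2).const_mul C₀
  exact le_of_tendsto_of_tendsto' hA hB step


set_option maxHeartbeats 2000000

/-- `L^p` Carleman estimates with linear weights for `(−Δ)^m`, `1 ≤ m < n/2`,
`p = 2n/(n+2m)`, `q = 2n/(n−2m)`, derived from the Jerison–Kenig Carleman
estimates with weights `|x|^{−t}`: assuming that for each `δ > 0` there is
`C(δ, n)` such that `‖|x|^{−t}u‖_{L^q} ≤ C‖|x|^{−t}(−Δ)^m u‖_{L^p}` whenever
`t > n/q` and `dist(t − n/q, ℤ) ≥ δ`, for `u ∈ C₀^∞(ℝⁿ \ {0})`, one has a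
constant `C` with `‖e^{k·x}u‖_{L^q} ≤ C‖e^{k·x}(−Δ)^m u‖_{L^p}` for all
`k ∈ ℝⁿ` and `u ∈ C₀^∞(ℝⁿ)`. -/
theorem stmt14 (n m : ℕ) (hm : 1 ≤ m) (hmn : 2 * m < n)
    (hJK : ∀ δ : ℝ, 0 < δ → ∃ C > 0, ∀ t : ℝ,
      (n : ℝ) / ((2 * n) / ((n : ℝ) - 2 * m)) < t →
      (∀ z : ℤ, δ ≤ |t - (n : ℝ) / ((2 * n) / ((n : ℝ) - 2 * m)) - z|) →
      ∀ u : EuclideanSpace ℝ (Fin n) → ℂ, ContDiff ℝ (⊤ : ℕ∞) u →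
        HasCompactSupport u → (0 : EuclideanSpace ℝ (Fin n)) ∉ tsupport u →
        (∫ x, (‖x‖ ^ (-t) * ‖u x‖) ^ ((2 * n) / ((n : ℝ) - 2 * m))) ^
            (((n : ℝ) - 2 * m) / (2 * n)) ≤
          C * (∫ x, (‖x‖ ^ (-t) * ‖polyLap n m u x‖) ^
              ((2 * n) / ((n : ℝ) + 2 * m))) ^ (((n : ℝ) + 2 * m) / (2 * n))) :
    ∃ C > 0, ∀ (k : EuclideanSpace ℝ (Fin n))
      (u : EuclideanSpace ℝ (Fin n) → ℂ), ContDiff ℝ (⊤ : ℕ∞) u → HasCompactSupport u →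
      (∫ x, (Real.exp ⟪k, x⟫ * ‖u x‖) ^ ((2 * n) / ((n : ℝ) - 2 * m))) ^
          (((n : ℝ) - 2 * m) / (2 * n)) ≤
        C * (∫ x, (Real.exp ⟪k, x⟫ * ‖polyLap n m u x‖) ^
            ((2 * n) / ((n : ℝ) + 2 * m))) ^ (((n : ℝ) + 2 * m) / (2 * n)) := by
  obtain ⟨C₀, hC₀pos, hC⟩ := hJK (1/2) one_half_pos
  refine ⟨C₀, hC₀pos, fun k u hu hcs => ?_⟩
  by_cases hk : k = 0
  · subst hk
    -- numeric setup (again)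
    have hm2n : 2 * (m:ℝ) + 1 ≤ (n:ℝ) := by exact_mod_cast hmn
    have hnpos : (0:ℝ) < n := by
      have : 0 < n := lt_of_le_of_lt (Nat.zero_le _) hmn
      exact_mod_cast this
    set q : ℝ := (2 * n) / ((n : ℝ) - 2 * m) with hqdef
    set p : ℝ := (2 * n) / ((n : ℝ) + 2 * m) with hpdef
    set iq : ℝ := ((n : ℝ) - 2 * m) / (2 * n) with hiqdef
    set ip : ℝ := ((n : ℝ) + 2 * m) / (2 * n) with hipdef
    have hmpos : (1:ℝ) ≤ (m:ℝ) := by exact_mod_cast hm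
    have hnm1 : (1:ℝ) ≤ (n:ℝ) - 2 * m := by linarith
    have hq : 0 < q := div_pos (by linarith) (by linarith)
    have hp : 0 < p := div_pos (by linarith) (by linarith)
    have hiq : 0 < iq := div_pos (by linarith) (by linarith)
    have hip : 0 < ip := div_pos (by linarith) (by linarith)
    -- support radius
    obtain ⟨R₀, hR₀⟩ := hcs.isBounded.subset_closedBall 0
    set R : ℝ := max R₀ 1 with hRdef
    have hR1 : (1:ℝ) ≤ R := le_max_right _ _
    have hRsub : tsupport u ⊆ Metric.closedBall 0 R :=
      hR₀.trans (Metric.closedBall_subset_closedBall (le_max_left _ _))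
    -- the approximating sequence of nonzero k's
    have hn0 : 0 < n := lt_of_le_of_lt (Nat.zero_le _) hmn
    set e₀ : EuclideanSpace ℝ (Fin n) := EuclideanSpace.single (⟨0, hn0⟩ : Fin n) 1 with he₀def
    have he₀ : ‖e₀‖ = 1 := by rw [he₀def, EuclideanSpace.norm_single]; norm_num
    have he₀ne : e₀ ≠ 0 := by
      intro h; rw [h] at he₀; simp at he₀
    set kseq : ℕ → EuclideanSpace ℝ (Fin n) := fun j => ((j:ℝ)+1)⁻¹ • e₀ with hkdef
    have hkpos : ∀ j : ℕ, (0:ℝ) < ((j:ℝ)+1)⁻¹ := fun j => by positivity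
    have hkn : ∀ j, kseq j ≠ 0 := fun j => smul_ne_zero (hkpos j).ne' he₀ne
    have hknorm : ∀ j, ‖kseq j‖ ≤ 1 := by
      intro j
      rw [hkdef]
      rw [norm_smul, he₀, Real.norm_eq_abs, abs_of_pos (hkpos j), mul_one]
      rw [inv_le_one_iff₀]
      right
      linarith [Nat.cast_nonneg (α := ℝ) j]
    -- per-j inequality from `key`
    have step : ∀ j,
        (∫ x, (Real.exp ⟪kseq j, x⟫ * ‖u x‖) ^ q) ^ iq ≤
          C₀ * (∫ x, (Real.exp ⟪kseq j, x⟫ * ‖polyLap n m u x‖) ^ p) ^ ip :=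
      fun j => key n m hm hmn C₀ hC (kseq j) (hkn j) u hu hcs
    -- weights and limits
    set W : ℕ → EuclideanSpace ℝ (Fin n) → ℝ := fun j x => Real.exp ⟪kseq j, x⟫ with hWdef
    have hWm : ∀ j, Measurable (W j) := fun j =>
      (Real.continuous_exp.comp (continuous_const.inner continuous_id)).measurable
    have hW0 : ∀ j x, 0 ≤ W j x := fun j x => Real.exp_nonneg _
    have hMb : ∀ j, ∀ x : EuclideanSpace ℝ (Fin n), ‖x‖ ≤ R → W j x ≤ Real.exp R := by
      intro j x hx
      apply Real.exp_le_exp.2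
      calc ⟪kseq j, x⟫ ≤ ‖kseq j‖ * ‖x‖ := real_inner_le_norm _ _
        _ ≤ 1 * R := mul_le_mul (hknorm j) hx (norm_nonneg x) zero_le_one
        _ = R := one_mul R
    have hconvx : ∀ x : EuclideanSpace ℝ (Fin n),
        Tendsto (fun j => W j x) atTop (𝓝 (Real.exp ⟪(0 : EuclideanSpace ℝ (Fin n)), x⟫)) := by
      intro x
      have h1 : Tendsto (fun j : ℕ => ((j:ℝ)+1)⁻¹ * ⟪e₀, x⟫) atTop (𝓝 (0 * ⟪e₀, x⟫)) := by
        apply Tendsto.mul_const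
        have := tendsto_one_div_add_atTop_nhds_zero_nat (𝕜 := ℝ)
        simpa [one_div] using this
      rw [zero_mul] at h1
      have h2 : Tendsto (fun j => ⟪kseq j, x⟫) atTop (𝓝 (0:ℝ)) := by
        apply h1.congr
        intro j
        rw [hkdef, real_inner_smul_left]
      have h3 := (Real.continuous_exp.continuousAt (x := (0:ℝ))).tendsto.comp h2
      have : ⟪(0 : EuclideanSpace ℝ (Fin n)), x⟫ = (0:ℝ) := inner_zero_left x
      rw [this]
      exact h3
    obtain ⟨S₁, hS₁⟩ := hcs.exists_bound_of_continuous hu.continuous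
    obtain ⟨S₂, hS₂⟩ := (hcs_polyLap n m hcs).exists_bound_of_continuous
      (contDiff_polyLap n m hu).continuous
    have hS₁0 : 0 ≤ S₁ := le_trans (norm_nonneg _) (hS₁ 0)
    have hS₂0 : 0 ≤ S₂ := le_trans (norm_nonneg _) (hS₂ 0)
    have hxR1 : ∀ x ∈ tsupport (fun x => ‖u x‖), ‖x‖ ≤ R := by
      intro x hx
      rw [tsupport_norm_eq] at hx
      exact mem_closedBall_zero_iff.1 (hRsub hx)
    have hxR2 : ∀ x ∈ tsupport (fun x => ‖polyLap n m u x‖), ‖x‖ ≤ R := by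
      intro x hx
      rw [tsupport_norm_eq] at hx
      exact mem_closedBall_zero_iff.1 (hRsub (tsupport_polyLap n m u hx))
    have hlim1 : Tendsto (fun j => ∫ x, (W j x * ‖u x‖) ^ q) atTop
        (𝓝 (∫ x, (Real.exp ⟪(0 : EuclideanSpace ℝ (Fin n)), x⟫ * ‖u x‖) ^ q)) :=
      lim_weight (fun x => ‖u x‖) hu.continuous.norm hcs.norm (fun x => norm_nonneg _)
        W _ hWm hW0 (Real.exp R) S₁ (Real.exp_nonneg _) hS₁0
        (fun j x hx => hMb j x (hxR1 x hx)) hS₁ (fun x _ => hconvx x) q hq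
    have hlim2 : Tendsto (fun j => ∫ x, (W j x * ‖polyLap n m u x‖) ^ p) atTop
        (𝓝 (∫ x, (Real.exp ⟪(0 : EuclideanSpace ℝ (Fin n)), x⟫ * ‖polyLap n m u x‖) ^ p)) :=
      lim_weight (fun x => ‖polyLap n m u x‖) (contDiff_polyLap n m hu).continuous.norm
        (hcs_polyLap n m hcs).norm (fun x => norm_nonneg _)
        W _ hWm hW0 (Real.exp R) S₂ (Real.exp_nonneg _) hS₂0
        (fun j x hx => hMb j x (hxR2 x hx)) hS₂ (fun x _ => hconvx x) p hp
    have hA : Tendsto (fun j => (∫ x, (W j x * ‖u x‖) ^ q) ^ iq) atTop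
        (𝓝 ((∫ x, (Real.exp ⟪(0 : EuclideanSpace ℝ (Fin n)), x⟫ * ‖u x‖) ^ q) ^ iq)) :=
      ((Real.continuousAt_rpow_const _ iq (Or.inr hiq.le)).tendsto.comp hlim1)
    have hB : Tendsto (fun j => C₀ * (∫ x, (W j x * ‖polyLap n m u x‖) ^ p) ^ ip) atTop
        (𝓝 (C₀ * (∫ x, (Real.exp ⟪(0 : EuclideanSpace ℝ (Fin n)), x⟫ *
          ‖polyLap n m u x‖) ^ p) ^ ip)) :=
      ((Real.continuousAt_rpow_const _ ip (Or.inr hip.le)).tendsto.comp hlim2).const_mul C₀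
    exact le_of_tendsto_of_tendsto' hA hB step
  · exact key n m hm hmn C₀ hC k hk u hu hcs
end
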